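/- arXiv:2309.11796 — 5 statements merged into one kernel-verified Lean document; each statement's English description precedes it below -/
import Mathlib

section
/- Let n ≥ 1 and let β : ℝⁿ → Matrix (Fin n) (Fin n) ℝ be a smooth map with β(x) skew-symmetric for every x, satisfying a conservation law. Then for every smooth compactly supported map α : ℝⁿ → ℝⁿ (a 1-form with components αₖ), one has ∫_{ℝⁿ} (δ_β α)(x) · v(x) dx = 0, where (δ_β α)(x) = -Σ_{i,k} (G(x)⁻¹)_{ik} · ∂ᵢαₖ(x). (Proposition 3.8 for the flat metric on ℝⁿ) -/
open MeasureTheory Matrix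

/-- Partial derivative in the `i`-th coordinate direction on Euclidean space. -/
noncomputable def pd {n : ℕ} (i : Fin n) (f : EuclideanSpace ℝ (Fin n) → ℝ)
    (x : EuclideanSpace ℝ (Fin n)) : ℝ :=
  fderiv ℝ f x (EuclideanSpace.single i 1)

/-- `G(x) = 1 - β(x)·β(x)`. -/
noncomputable def Gmat {n : ℕ} (β : EuclideanSpace ℝ (Fin n) → Matrix (Fin n) (Fin n) ℝ)
    (x : EuclideanSpace ℝ (Fin n)) : Matrix (Fin n) (Fin n) ℝ :=
  1 - β x * β x

/-- The volume density `v(x) = (det G(x))^{1/4}`. -/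
noncomputable def vdens {n : ℕ} (β : EuclideanSpace ℝ (Fin n) → Matrix (Fin n) (Fin n) ℝ)
    (x : EuclideanSpace ℝ (Fin n)) : ℝ :=
  (Gmat β x).det ^ ((1 : ℝ) / 4)

/-- The stress-energy tensor `S(x) = -1 + v(x)·G(x)⁻¹`. -/
noncomputable def Smat {n : ℕ} (β : EuclideanSpace ℝ (Fin n) → Matrix (Fin n) (Fin n) ℝ)
    (x : EuclideanSpace ℝ (Fin n)) : Matrix (Fin n) (Fin n) ℝ :=
  -1 + vdens β x • (Gmat β x)⁻¹

/-- `β` satisfies a conservation law if the stress-energy tensor is divergence free. -/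
def ConservationLaw {n : ℕ} (β : EuclideanSpace ℝ (Fin n) → Matrix (Fin n) (Fin n) ℝ) : Prop :=
  ∀ (x : EuclideanSpace ℝ (Fin n)) (j : Fin n), ∑ i, pd i (fun y => Smat β y i j) x = 0

/- ### Auxiliary lemmas -/

section Aux

variable {n : ℕ} {β : EuclideanSpace ℝ (Fin n) → Matrix (Fin n) (Fin n) ℝ}

theorem Gmat_posdef (hβskew : ∀ x, (β x)ᵀ = -(β x)) (x : EuclideanSpace ℝ (Fin n)) :
    (Gmat β x).PosDef := by
  have : Gmat β x = 1 + (β x)ᴴ * β x := by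
    have h1 : (β x)ᴴ = (β x)ᵀ := by
      ext a b; simp [Matrix.conjTranspose_apply]
    rw [h1, hβskew x, Matrix.neg_mul, Gmat, sub_eq_add_neg]
  rw [this]
  exact Matrix.PosDef.one.add_posSemidef (posSemidef_conjTranspose_mul_self (β x))

theorem Gmat_det_pos (hβskew : ∀ x, (β x)ᵀ = -(β x)) (x : EuclideanSpace ℝ (Fin n)) :
    0 < (Gmat β x).det := (Gmat_posdef hβskew x).det_pos

theorem Gmat_entry_smooth (hβ : ∀ i j, ContDiff ℝ (⊤ : ℕ∞) fun x => β x i j) (i j : Fin n) :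
    ContDiff ℝ (⊤ : ℕ∞) fun x => Gmat β x i j := by
  simp only [Gmat, Matrix.sub_apply, Matrix.mul_apply]
  exact ContDiff.sub (by simpa using contDiff_const (c := (1 : Matrix (Fin n) (Fin n) ℝ) i j))
    (ContDiff.sum fun k _ => (hβ i k).mul (hβ k j))

theorem contDiff_det' {M : EuclideanSpace ℝ (Fin n) → Matrix (Fin n) (Fin n) ℝ}
    (h : ∀ i j, ContDiff ℝ (⊤ : ℕ∞) fun x => M x i j) :
    ContDiff ℝ (⊤ : ℕ∞) fun x => (M x).det := by
  simp_rw [Matrix.det_apply, Units.smul_def, zsmul_eq_mul]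
  exact ContDiff.sum fun σ _ => contDiff_const.mul (contDiff_prod fun i _ => h (σ i) i)

theorem vdens_smooth (hβ : ∀ i j, ContDiff ℝ (⊤ : ℕ∞) fun x => β x i j)
    (hβskew : ∀ x, (β x)ᵀ = -(β x)) : ContDiff ℝ (⊤ : ℕ∞) (vdens β) := by
  rw [contDiff_iff_contDiffAt]
  intro x
  exact ContDiffAt.rpow_const_of_ne ((contDiff_det' (Gmat_entry_smooth hβ)).contDiffAt)
    (Gmat_det_pos hβskew x).ne'

theorem Ginv_entry_smooth (hβ : ∀ i j, ContDiff ℝ (⊤ : ℕ∞) fun x => β x i j)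
    (hβskew : ∀ x, (β x)ᵀ = -(β x)) (i j : Fin n) :
    ContDiff ℝ (⊤ : ℕ∞) fun x => (Gmat β x)⁻¹ i j := by
  have hadj : ContDiff ℝ (⊤ : ℕ∞) fun x => (Gmat β x).adjugate i j := by
    simp_rw [Matrix.adjugate_apply]
    apply contDiff_det'
    intro a b
    rcases eq_or_ne a j with rfl | hne
    · simp [Matrix.updateRow_apply]
      exact contDiff_const
    · simp [Matrix.updateRow_apply, hne]
      exact Gmat_entry_smooth hβ a b
  have : (fun x => (Gmat β x)⁻¹ i j) = fun x => ((Gmat β x).det)⁻¹ * (Gmat β x).adjugate i j := by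
    funext x
    rw [Matrix.inv_def]
    simp [Ring.inverse_eq_inv']
  rw [this]
  exact (((contDiff_det' (Gmat_entry_smooth hβ))).inv
    fun x => (Gmat_det_pos hβskew x).ne').mul hadj

theorem integral_pd_zero {f : EuclideanSpace ℝ (Fin n) → ℝ} (hf : ContDiff ℝ (⊤ : ℕ∞) f)
    (hs : HasCompactSupport f) (i : Fin n) : ∫ x, pd i f x = 0 := by
  have h := integral_mul_fderiv_eq_neg_fderiv_mul_of_integrable
    (f := fun _ : EuclideanSpace ℝ (Fin n) => (1:ℝ)) (g := f) (v := EuclideanSpace.single i 1)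
    (μ := volume) ?_ ?_ ?_ (fun x _ => (differentiable_const (1:ℝ)) x) (fun x _ => hf.differentiable (by simp) x)
  · simpa [pd, fderiv_fun_const] using h
  · apply Integrable.congr (integrable_zero _ _ _)
    filter_upwards with x
    simp [fderiv_fun_const]
  · simp only [one_mul]
    exact ((hf.continuous_fderiv (by simp)).clm_apply continuous_const).integrable_of_hasCompactSupport
      (hs.fderiv_apply ℝ (EuclideanSpace.single i 1))
  · simpa using hf.continuous.integrable_of_hasCompactSupport hs

theorem pd_integrable {f : EuclideanSpace ℝ (Fin n) → ℝ} (hf : ContDiff ℝ (⊤ : ℕ∞) f)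
    (hs : HasCompactSupport f) (i : Fin n) : Integrable (fun x => pd i f x) := by
  exact ((hf.continuous_fderiv (by simp)).clm_apply continuous_const).integrable_of_hasCompactSupport
    (hs.fderiv_apply ℝ (EuclideanSpace.single i 1))

theorem pd_mul {f g : EuclideanSpace ℝ (Fin n) → ℝ} {x : EuclideanSpace ℝ (Fin n)}
    (hf : DifferentiableAt ℝ f x) (hg : DifferentiableAt ℝ g x) (i : Fin n) :
    pd i (fun y => f y * g y) x = pd i f x * g x + f x * pd i g x := by
  unfold pd
  rw [fderiv_fun_mul hf hg]
  simp only [ContinuousLinearMap.add_apply, ContinuousLinearMap.smul_apply, smul_eq_mul]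
  ring

theorem pd_add_const {f : EuclideanSpace ℝ (Fin n) → ℝ} {c : ℝ} (i : Fin n)
    (x : EuclideanSpace ℝ (Fin n)) :
    pd i (fun y => f y + c) x = pd i f x := by
  unfold pd
  rw [fderiv_add_const]

end Aux

/-- **Proposition 3.8 on flat ℝⁿ.** If the smooth skew-symmetric-valued
`β` satisfies a conservation law, then `∫ (δ_β α) · v = 0` for every smooth compactly
supported 1-form `α`. -/
theorem integral_delta_beta_eq_zero (n : ℕ) (hn : 1 ≤ n)
    (β : EuclideanSpace ℝ (Fin n) → Matrix (Fin n) (Fin n) ℝ)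
    (hβsmooth : ∀ i j, ContDiff ℝ (⊤ : ℕ∞) fun x => β x i j)
    (hβskew : ∀ x, (β x)ᵀ = -(β x))
    (hcons : ConservationLaw β)
    (α : EuclideanSpace ℝ (Fin n) → (Fin n → ℝ))
    (hαsmooth : ∀ k, ContDiff ℝ (⊤ : ℕ∞) fun x => α x k)
    (hαsupp : HasCompactSupport α) :
    ∫ x, (-(∑ i, ∑ k, (Gmat β x)⁻¹ i k * pd i (fun y => α y k) x)) * vdens β x = 0 := by
  -- the functions whose divergence we integrate
  set h : Fin n → Fin n → EuclideanSpace ℝ (Fin n) → ℝ :=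
    fun i k y => vdens β y * (Gmat β y)⁻¹ i k * α y k with hh
  have hv : ContDiff ℝ (⊤ : ℕ∞) (vdens β) := vdens_smooth hβsmooth hβskew
  have hG : ∀ i k, ContDiff ℝ (⊤ : ℕ∞) fun x => (Gmat β x)⁻¹ i k :=
    Ginv_entry_smooth hβsmooth hβskew
  have hαk : ∀ k, HasCompactSupport fun y => α y k := by
    intro k
    exact hαsupp.comp_left (g := fun v : Fin n → ℝ => v k) rfl
  have hsm : ∀ i k, ContDiff ℝ (⊤ : ℕ∞) (h i k) :=
    fun i k => ((hv.mul (hG i k)).mul (hαsmooth k))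
  have hsup : ∀ i k, HasCompactSupport (h i k) := by
    intro i k
    exact HasCompactSupport.mul_left (hαk k)
  -- the pointwise identity
  have key : ∀ x, (-(∑ i, ∑ k, (Gmat β x)⁻¹ i k * pd i (fun y => α y k) x)) * vdens β x
      = -∑ i, ∑ k, pd i (h i k) x := by
    intro x
    have step1 : ∀ i k, pd i (h i k) x
        = pd i (fun y => Smat β y i k) x * α x k
          + (vdens β x * (Gmat β x)⁻¹ i k) * pd i (fun y => α y k) x := by
      intro i k
      have hw : DifferentiableAt ℝ (fun y => vdens β y * (Gmat β y)⁻¹ i k) x :=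
        ((hv.differentiable (by simp)).mul ((hG i k).differentiable (by simp))) x
      have hα : DifferentiableAt ℝ (fun y => α y k) x :=
        ((hαsmooth k).differentiable (by simp)) x
      have := pd_mul (f := fun y => vdens β y * (Gmat β y)⁻¹ i k)
        (g := fun y => α y k) hw hα i
      have hwS : (fun y => vdens β y * (Gmat β y)⁻¹ i k)
          = fun y => Smat β y i k + (1 : Matrix (Fin n) (Fin n) ℝ) i k := by
        funext y
        simp only [Smat, Matrix.add_apply, Matrix.neg_apply, Matrix.smul_apply, smul_eq_mul]
        ring
      have hpd : pd i (fun y => vdens β y * (Gmat β y)⁻¹ i k) x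
          = pd i (fun y => Smat β y i k) x := by
        rw [hwS]; exact pd_add_const i x
      rw [hh]
      simp only at this ⊢
      rw [this, hpd]
    calc (-(∑ i, ∑ k, (Gmat β x)⁻¹ i k * pd i (fun y => α y k) x)) * vdens β x
        = -∑ i, ∑ k, (pd i (fun y => Smat β y i k) x * α x k
            + (vdens β x * (Gmat β x)⁻¹ i k) * pd i (fun y => α y k) x) := by
          have hzero : ∑ i, ∑ k, pd i (fun y => Smat β y i k) x * α x k = 0 := by
            rw [Finset.sum_comm]
            apply Finset.sum_eq_zero
            intro k _
            rw [← Finset.sum_mul, hcons x k, zero_mul]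
          simp only [Finset.sum_add_distrib, hzero, zero_add]
          rw [neg_mul, neg_inj, Finset.sum_mul]
          exact Finset.sum_congr rfl fun i _ => by
            rw [Finset.sum_mul]
            exact Finset.sum_congr rfl fun k _ => by ring
      _ = -∑ i, ∑ k, pd i (h i k) x := by
          congr 1
          exact Finset.sum_congr rfl fun i _ => Finset.sum_congr rfl fun k _ => (step1 i k).symm
  have : (∫ x, (-(∑ i, ∑ k, (Gmat β x)⁻¹ i k * pd i (fun y => α y k) x)) * vdens β x)
      = ∫ x, -∑ i, ∑ k, pd i (h i k) x := by
    congr 1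
    funext x
    exact key x
  rw [this, integral_neg, neg_eq_zero,
    integral_finset_sum _ fun i _ => integrable_finset_sum _ fun k _ =>
      pd_integrable (hsm i k) (hsup i k) i]
  apply Finset.sum_eq_zero
  intro i _
  rw [integral_finset_sum _ fun k _ => pd_integrable (hsm i k) (hsup i k) i]
  exact Finset.sum_eq_zero fun k _ => integral_pd_zero (hsm i k) (hsup i k) i
end

section
/- Let n ≥ 1 and let β : ℝⁿ → Matrix (Fin n) (Fin n) ℝ be a smooth map with β(x) skew-symmetric for every x, satisfying a conservation law. Define Δ_β f (x) = -Σ_{i,k} (G(x)⁻¹)_{ik} · ∂ᵢ∂ₖ f(x) for smooth f : ℝⁿ → ℝ. Then for all smooth f₁, f₂ : ℝⁿ → ℝ, at least one of which is compactly supported, ∫ (Δ_β f₁)(x)·f₂(x)·v(x) dx = ∫ Σ_{i,k} (G(x)⁻¹)_{ik}·∂ᵢf₁(x)·∂ₖf₂(x)·v(x) dx = ∫ f₁(x)·(Δ_β f₂)(x)·v(x) dx. (Corollary 3.9 for the flat metric on ℝⁿ) -/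
open MeasureTheory Matrix

namespace IBPAux

variable {n : ℕ}


/-- The integral of a partial derivative of a smooth compactly supported function vanishes. -/
lemma integral_pd_eq_zero (F : EuclideanSpace ℝ (Fin n) → ℝ)
    (hF : ContDiff ℝ (⊤ : ℕ∞) F) (hFc : HasCompactSupport F) (i : Fin n) :
    ∫ x, pd i F x = 0 := by
  obtain ⟨C, hlip⟩ := ContDiff.lipschitzWith_of_hasCompactSupport hFc hF (by simp)
  have h := LipschitzWith.integral_lineDeriv_mul_eq
    (μ := (volume : Measure (EuclideanSpace ℝ (Fin n))))
    (LipschitzWith.const' (1:ℝ) (K := 0)) hlip hFc (EuclideanSpace.single i 1)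
  have heq : ∀ x : EuclideanSpace ℝ (Fin n), lineDeriv ℝ F x (-(EuclideanSpace.single i 1)) = - pd i F x := by
    intro x
    have hd : DifferentiableAt ℝ F x := (hF.differentiable (by simp)).differentiableAt
    rw [hd.lineDeriv_eq_fderiv, map_neg]; rfl
  have hconst : ∀ x : EuclideanSpace ℝ (Fin n),
      lineDeriv ℝ (fun _ => (1:ℝ)) x (EuclideanSpace.single i 1) = 0 := fun x => by
    simp [lineDeriv]
  simp only [heq, hconst, zero_mul, integral_zero, mul_one, integral_neg] at h
  linarith [h]

lemma contDiff_det {m : ℕ} {M : EuclideanSpace ℝ (Fin n) → Matrix (Fin m) (Fin m) ℝ}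
    (h : ∀ i j, ContDiff ℝ (⊤ : ℕ∞) fun x => M x i j) :
    ContDiff ℝ (⊤ : ℕ∞) fun x => (M x).det := by
  simp only [Matrix.det_apply]
  apply ContDiff.sum
  intro σ _
  have : ContDiff ℝ (⊤ : ℕ∞) fun x => ∏ i, M x (σ i) i :=
    contDiff_prod fun i _ => h (σ i) i
  exact ContDiff.const_smul (Equiv.Perm.sign σ : ℤ) this

variable (β : EuclideanSpace ℝ (Fin n) → Matrix (Fin n) (Fin n) ℝ)

lemma Gmat_posDef (hβskew : ∀ x, (β x)ᵀ = -(β x)) (x : EuclideanSpace ℝ (Fin n)) : (Gmat β x).PosDef := by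
  have h : Gmat β x = 1 + (β x)ᵀ * β x := by
    rw [hβskew x]; simp [Gmat, sub_eq_add_neg, Matrix.neg_mul]
  rw [h]
  have h1 : (1 : Matrix (Fin n) (Fin n) ℝ).PosDef := Matrix.PosDef.one
  have h2 : ((β x)ᵀ * β x).PosSemidef := by
    have := Matrix.posSemidef_conjTranspose_mul_self (β x)
    simpa using this
  exact h1.add_posSemidef h2

lemma Gmat_symm (hβskew : ∀ x, (β x)ᵀ = -(β x)) (x : EuclideanSpace ℝ (Fin n)) : (Gmat β x)ᵀ = Gmat β x := by
  simp [Gmat, Matrix.transpose_sub, Matrix.transpose_mul, hβskew x, Matrix.neg_mul,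
    Matrix.mul_neg]

lemma Ginv_symm (hβskew : ∀ x, (β x)ᵀ = -(β x)) (x : EuclideanSpace ℝ (Fin n)) (i k : Fin n) :
    (Gmat β x)⁻¹ i k = (Gmat β x)⁻¹ k i := by
  have h : ((Gmat β x)⁻¹)ᵀ = (Gmat β x)⁻¹ := by
    rw [Matrix.transpose_nonsing_inv, Gmat_symm β hβskew]
  conv_lhs => rw [← h]
  rfl

lemma Gmat_entry_smooth (hβ : ∀ i j, ContDiff ℝ (⊤ : ℕ∞) fun x => β x i j) (i j : Fin n) :
    ContDiff ℝ (⊤ : ℕ∞) fun x => Gmat β x i j := by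
  have h : (fun x => Gmat β x i j) = fun x => (1 : Matrix (Fin n) (Fin n) ℝ) i j
      - ∑ k, β x i k * β x k j := by
    funext x; simp [Gmat, Matrix.sub_apply, Matrix.mul_apply]
  rw [h]
  exact contDiff_const.sub (ContDiff.sum fun k _ => (hβ i k).mul (hβ k j))

lemma Ginv_entry_smooth (hβ : ∀ i j, ContDiff ℝ (⊤ : ℕ∞) fun x => β x i j)
    (hβskew : ∀ x, (β x)ᵀ = -(β x)) (i j : Fin n) :
    ContDiff ℝ (⊤ : ℕ∞) fun x => (Gmat β x)⁻¹ i j := by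
  have hdet : ContDiff ℝ (⊤ : ℕ∞) fun x => (Gmat β x).det :=
    contDiff_det (Gmat_entry_smooth β hβ)
  have hdetne : ∀ x : EuclideanSpace ℝ (Fin n), (Gmat β x).det ≠ 0 := fun x =>
    (Gmat_posDef β hβskew x).det_pos.ne'
  have hadj : ContDiff ℝ (⊤ : ℕ∞) fun x => (Gmat β x).adjugate i j := by
    have h : (fun x => (Gmat β x).adjugate i j)
        = fun x => ((Gmat β x).updateRow j (Pi.single i 1)).det := by
      funext x; rw [Matrix.adjugate_apply]
    rw [h]
    apply contDiff_det
    intro a b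
    rcases eq_or_ne a j with rfl | hne
    · simp only [Matrix.updateRow_self]; exact contDiff_const
    · simp only [Matrix.updateRow_ne hne]; exact Gmat_entry_smooth β hβ a b
  have h : (fun x => (Gmat β x)⁻¹ i j)
      = fun x => ((Gmat β x).det)⁻¹ * (Gmat β x).adjugate i j := by
    funext x
    rw [Matrix.inv_def, Matrix.smul_apply, Ring.inverse_eq_inv', smul_eq_mul]
  rw [h]
  exact (hdet.inv hdetne).mul hadj

lemma vdens_smooth (hβ : ∀ i j, ContDiff ℝ (⊤ : ℕ∞) fun x => β x i j)
    (hβskew : ∀ x, (β x)ᵀ = -(β x)) :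
    ContDiff ℝ (⊤ : ℕ∞) (vdens β) := by
  have hdet : ContDiff ℝ (⊤ : ℕ∞) fun x => (Gmat β x).det :=
    contDiff_det (Gmat_entry_smooth β hβ)
  rw [contDiff_iff_contDiffAt]
  intro x
  exact ContDiffAt.rpow_const_of_ne hdet.contDiffAt (Gmat_posDef β hβskew x).det_pos.ne'

variable {β}

lemma pd_smooth {f : EuclideanSpace ℝ (Fin n) → ℝ} (hf : ContDiff ℝ (⊤ : ℕ∞) f) (i : Fin n) :
    ContDiff ℝ (⊤ : ℕ∞) (pd i f) := by
  have h1 : ContDiff ℝ (⊤ : ℕ∞) (fderiv ℝ f) := (hf.fderiv_right (m := (⊤ : ℕ∞)) (by simp))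
  exact (ContinuousLinearMap.apply ℝ ℝ (EuclideanSpace.single i 1)).contDiff.comp h1

lemma pd_hcs {f : EuclideanSpace ℝ (Fin n) → ℝ} (hf : HasCompactSupport f) (i : Fin n) :
    HasCompactSupport (pd i f) := by
  have h := hf.fderiv (𝕜 := ℝ)
  exact h.comp_left (g := fun L : EuclideanSpace ℝ (Fin n) →L[ℝ] ℝ => L (EuclideanSpace.single i 1)) rfl

lemma pd_mul {g h : EuclideanSpace ℝ (Fin n) → ℝ} {x : EuclideanSpace ℝ (Fin n)} (hg : DifferentiableAt ℝ g x)
    (hh : DifferentiableAt ℝ h x) (i : Fin n) :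
    pd i (fun y => g y * h y) x = pd i g x * h x + g x * pd i h x := by
  unfold pd
  rw [fderiv_fun_mul hg hh]
  simp only [ContinuousLinearMap.add_apply, ContinuousLinearMap.smul_apply, smul_eq_mul]
  ring

lemma pd_mul3 {u v w : EuclideanSpace ℝ (Fin n) → ℝ} {x : EuclideanSpace ℝ (Fin n)} (hu : DifferentiableAt ℝ u x)
    (hv : DifferentiableAt ℝ v x) (hw : DifferentiableAt ℝ w x) (i : Fin n) :
    pd i (fun y => u y * v y * w y) x
      = pd i u x * v x * w x + u x * pd i v x * w x + u x * v x * pd i w x := by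
  rw [pd_mul (g := fun y => u y * v y) (hu.mul hv) hw i, pd_mul hu hv i]
  ring

lemma pd_sum {ι : Type*} {s : Finset ι} {g : ι → EuclideanSpace ℝ (Fin n) → ℝ} {x : EuclideanSpace ℝ (Fin n)}
    (hg : ∀ k ∈ s, DifferentiableAt ℝ (g k) x) (i : Fin n) :
    pd i (fun y => ∑ k ∈ s, g k y) x = ∑ k ∈ s, pd i (g k) x := by
  unfold pd
  rw [fderiv_fun_sum hg]
  simp

lemma pd_const_add {c : ℝ} {g : EuclideanSpace ℝ (Fin n) → ℝ} (i : Fin n) :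
    pd i (fun y => c + g y) = pd i g := by
  funext x; unfold pd; rw [fderiv_const_add]

lemma hcs_sum {ι : Type*} (s : Finset ι) (g : ι → EuclideanSpace ℝ (Fin n) → ℝ)
    (h : ∀ k ∈ s, HasCompactSupport (g k)) :
    HasCompactSupport (fun x => ∑ k ∈ s, g k x) := by
  classical
  induction s using Finset.induction_on with
  | empty => simp only [Finset.sum_empty]; exact HasCompactSupport.zero
  | @insert a s ha ih =>
    simp only [Finset.sum_insert ha]
    exact (h a (Finset.mem_insert_self a s)).add
      (ih fun k hk => h k (Finset.mem_insert_of_mem hk))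

lemma hcs_mul3 {u v w : EuclideanSpace ℝ (Fin n) → ℝ} (h : HasCompactSupport v ∨ HasCompactSupport w) :
    HasCompactSupport (fun x => u x * v x * w x) := by
  rcases h with h | h
  · exact ((h.mul_left (f := u)).mul_right (f' := w))
  · exact (h.mul_left (f := fun x => u x * v x))

end IBPAux

namespace IBPAux

variable {n : ℕ}

lemma key (β : EuclideanSpace ℝ (Fin n) → Matrix (Fin n) (Fin n) ℝ)
    (hβ : ∀ i j, ContDiff ℝ (⊤ : ℕ∞) fun x => β x i j)
    (hβskew : ∀ x, (β x)ᵀ = -(β x))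
    (hcons : ConservationLaw β)
    (f g : EuclideanSpace ℝ (Fin n) → ℝ)
    (hf : ContDiff ℝ (⊤ : ℕ∞) f) (hg : ContDiff ℝ (⊤ : ℕ∞) g)
    (hc : HasCompactSupport f ∨ HasCompactSupport g) :
    (∫ x, (-(∑ i, ∑ k, (Gmat β x)⁻¹ i k * pd i (fun y => pd k f y) x)) * g x * vdens β x)
      = ∫ x, (∑ i, ∑ k, (Gmat β x)⁻¹ i k * pd i f x * pd k g x) * vdens β x := by
  classical
  set a : Fin n → Fin n → EuclideanSpace ℝ (Fin n) → ℝ :=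
    fun i k x => vdens β x * (Gmat β x)⁻¹ i k with ha
  have hva := vdens_smooth β hβ hβskew
  have haC : ∀ i k, ContDiff ℝ (⊤ : ℕ∞) (a i k) :=
    fun i k => hva.mul (Ginv_entry_smooth β hβ hβskew i k)
  have haD : ∀ i k x, DifferentiableAt ℝ (a i k) x :=
    fun i k x => ((haC i k).differentiable (by simp)).differentiableAt
  have hgD : ∀ x, DifferentiableAt ℝ g x := fun x => (hg.differentiable (by simp)).differentiableAt
  have hpdfC : ∀ k, ContDiff ℝ (⊤ : ℕ∞) (pd k f) := fun k => pd_smooth hf k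
  have hpdfD : ∀ k x, DifferentiableAt ℝ (pd k f) x :=
    fun k x => ((hpdfC k).differentiable (by simp)).differentiableAt
  have haSymm : ∀ x i k, a i k x = a k i x := by
    intro x i k; simp only [ha]; rw [Ginv_symm β hβskew x i k]
  -- conservation law in terms of `a`
  have hconsa : ∀ (x : EuclideanSpace ℝ (Fin n)) (k : Fin n), ∑ i, pd i (a i k) x = 0 := by
    intro x k
    have h := hcons x k
    calc ∑ i, pd i (a i k) x = ∑ i, pd i (fun y => Smat β y i k) x := by
          refine Finset.sum_congr rfl fun i _ => ?_
          have he : (fun y => Smat β y i k)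
              = fun y => ((-1 : Matrix (Fin n) (Fin n) ℝ) i k) + a i k y := by
            funext y
            simp [Smat, Matrix.add_apply, Matrix.smul_apply, smul_eq_mul, ha]
          rw [he, pd_const_add]
      _ = 0 := h
  -- the vector field
  set Fi : Fin n → EuclideanSpace ℝ (Fin n) → ℝ :=
    fun i x => ∑ k, a i k x * pd k f x * g x with hFi
  have hFiC : ∀ i, ContDiff ℝ (⊤ : ℕ∞) (Fi i) :=
    fun i => ContDiff.sum fun k _ => ((haC i k).mul (hpdfC k)).mul hg
  have hFic : ∀ i, HasCompactSupport (Fi i) := by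
    intro i
    exact hcs_sum Finset.univ _ fun k _ =>
      hcs_mul3 (u := a i k) (hc.imp (fun h => pd_hcs h k) id)
  have hdiv : ∀ i, ∫ x, pd i (Fi i) x = 0 :=
    fun i => integral_pd_eq_zero _ (hFiC i) (hFic i) i
  set B : EuclideanSpace ℝ (Fin n) → ℝ :=
    fun x => ∑ i, ∑ k, a i k x * pd i (fun y => pd k f y) x * g x with hB
  set C : EuclideanSpace ℝ (Fin n) → ℝ :=
    fun x => ∑ i, ∑ k, a i k x * pd k f x * pd i g x with hC
  have hpoint : ∀ x, ∑ i, pd i (Fi i) x = B x + C x := by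
    intro x
    have hexp : ∀ i, pd i (Fi i) x = ∑ k, (pd i (a i k) x * pd k f x * g x
        + a i k x * pd i (fun y => pd k f y) x * g x
        + a i k x * pd k f x * pd i g x) := by
      intro i
      rw [hFi]
      rw [pd_sum (g := fun k y => a i k y * pd k f y * g y) (fun k _ => ((haD i k x).mul (hpdfD k x)).mul (hgD x)) i]
      exact Finset.sum_congr rfl fun k _ => pd_mul3 (haD i k x) (hpdfD k x) (hgD x) i
    calc ∑ i, pd i (Fi i) x
        = ∑ i, ∑ k, (pd i (a i k) x * pd k f x * g x
            + a i k x * pd i (fun y => pd k f y) x * g x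
            + a i k x * pd k f x * pd i g x) := Finset.sum_congr rfl fun i _ => hexp i
      _ = (∑ i, ∑ k, pd i (a i k) x * pd k f x * g x) + (B x + C x) := by
          rw [hB, hC]
          simp only [Finset.sum_add_distrib]
          ring
      _ = B x + C x := by
          have h1 : ∑ i, ∑ k, pd i (a i k) x * pd k f x * g x = 0 := by
            rw [Finset.sum_comm]
            refine Finset.sum_eq_zero fun k _ => ?_
            calc ∑ i, pd i (a i k) x * pd k f x * g x
                = (∑ i, pd i (a i k) x) * (pd k f x * g x) := by
                  rw [Finset.sum_mul]
                  exact Finset.sum_congr rfl fun i _ => (mul_assoc _ _ _)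
              _ = 0 := by rw [hconsa x k, zero_mul]
          rw [h1, zero_add]
  -- integrability
  have hintB : Integrable B := by
    rw [hB]
    apply integrable_finset_sum
    intro i _
    apply integrable_finset_sum
    intro k _
    refine Continuous.integrable_of_hasCompactSupport ?_ ?_
    · exact (((haC i k).continuous.mul (pd_smooth (hpdfC k) i).continuous).mul hg.continuous)
    · exact hcs_mul3 (u := a i k) (hc.imp (fun h => pd_hcs (pd_hcs h k) i) id)
  have hintC : Integrable C := by
    rw [hC]
    apply integrable_finset_sum
    intro i _
    apply integrable_finset_sum
    intro k _
    refine Continuous.integrable_of_hasCompactSupport ?_ ?_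
    · exact (((haC i k).continuous.mul (hpdfC k).continuous).mul (pd_smooth hg i).continuous)
    · exact hcs_mul3 (u := a i k) (hc.imp (fun h => pd_hcs h k) (fun h => pd_hcs h i))
  have hsum0 : (∫ x, B x) + (∫ x, C x) = 0 := by
    have h0 : ∫ x, (B x + C x) = 0 := by
      have h1 : ∫ x, ∑ i, pd i (Fi i) x = 0 := by
        rw [integral_finset_sum _ (fun i _ => Continuous.integrable_of_hasCompactSupport
          (pd_smooth (hFiC i) i).continuous (pd_hcs (hFic i) i))]
        simp [hdiv]
      rw [show (fun x => B x + C x) = fun x => ∑ i, pd i (Fi i) x from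
        funext fun x => (hpoint x).symm]
      exact h1
    rw [integral_add hintB hintC] at h0
    exact h0
  -- identify the integrands
  have hL : (fun x => (-(∑ i, ∑ k, (Gmat β x)⁻¹ i k * pd i (fun y => pd k f y) x))
      * g x * vdens β x) = fun x => -(B x) := by
    funext x
    rw [hB]
    simp only [neg_mul, neg_inj, Finset.sum_mul]
    refine Finset.sum_congr rfl fun i _ => Finset.sum_congr rfl fun k _ => ?_
    simp only [ha]; ring
  have hCC : (fun x => C x) = fun x => ∑ i, ∑ k, a i k x * pd i f x * pd k g x := by
    funext x
    rw [hC, Finset.sum_comm]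
    refine Finset.sum_congr rfl fun i _ => Finset.sum_congr rfl fun k _ => ?_
    rw [haSymm x k i]
  have hR : (fun x => (∑ i, ∑ k, (Gmat β x)⁻¹ i k * pd i f x * pd k g x) * vdens β x)
      = fun x => ∑ i, ∑ k, a i k x * pd i f x * pd k g x := by
    funext x
    simp only [Finset.sum_mul]
    refine Finset.sum_congr rfl fun i _ => Finset.sum_congr rfl fun k _ => ?_
    simp only [ha]; ring
  rw [hL, hR, ← hCC, integral_neg]
  linarith [hsum0]

end IBPAux

/-- **Corollary 3.9 on flat ℝⁿ.** Integration by parts for the operator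
`Δ_β f = -Σ (G⁻¹)_{ik} ∂ᵢ∂ₖ f` against the density `v`, for smooth `f₁, f₂` at least
one of which is compactly supported. -/
theorem integration_by_parts_delta_beta (n : ℕ) (hn : 1 ≤ n)
    (β : EuclideanSpace ℝ (Fin n) → Matrix (Fin n) (Fin n) ℝ)
    (hβsmooth : ∀ i j, ContDiff ℝ (⊤ : ℕ∞) fun x => β x i j)
    (hβskew : ∀ x, (β x)ᵀ = -(β x))
    (hcons : ConservationLaw β)
    (f₁ f₂ : EuclideanSpace ℝ (Fin n) → ℝ)
    (hf₁ : ContDiff ℝ (⊤ : ℕ∞) f₁) (hf₂ : ContDiff ℝ (⊤ : ℕ∞) f₂)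
    (hc : HasCompactSupport f₁ ∨ HasCompactSupport f₂) :
    (∫ x, (-(∑ i, ∑ k, (Gmat β x)⁻¹ i k * pd i (fun y => pd k f₁ y) x)) * f₂ x * vdens β x)
      = (∫ x, (∑ i, ∑ k, (Gmat β x)⁻¹ i k * pd i f₁ x * pd k f₂ x) * vdens β x) ∧
    (∫ x, (∑ i, ∑ k, (Gmat β x)⁻¹ i k * pd i f₁ x * pd k f₂ x) * vdens β x)
      = (∫ x, f₁ x * (-(∑ i, ∑ k, (Gmat β x)⁻¹ i k * pd i (fun y => pd k f₂ y) x)) * vdens β x) := by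
  constructor
  · exact IBPAux.key β hβsmooth hβskew hcons f₁ f₂ hf₁ hf₂ hc
  · have h := IBPAux.key β hβsmooth hβskew hcons f₂ f₁ hf₂ hf₁ hc.symm
    have h1 : (fun x => (∑ i, ∑ k, (Gmat β x)⁻¹ i k * pd i f₁ x * pd k f₂ x) * vdens β x)
        = fun x => (∑ i, ∑ k, (Gmat β x)⁻¹ i k * pd i f₂ x * pd k f₁ x) * vdens β x := by
      funext x
      congr 1
      rw [Finset.sum_comm]
      refine Finset.sum_congr rfl fun i _ => Finset.sum_congr rfl fun k _ => ?_
      rw [IBPAux.Ginv_symm β hβskew x k i]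
      ring
    have h2 : (fun x => f₁ x * (-(∑ i, ∑ k, (Gmat β x)⁻¹ i k * pd i (fun y => pd k f₂ y) x))
          * vdens β x)
        = fun x => (-(∑ i, ∑ k, (Gmat β x)⁻¹ i k * pd i (fun y => pd k f₂ y) x))
          * f₁ x * vdens β x := by
      funext x; ring
    show _ = ∫ x, (fun x => f₁ x * (-(∑ i, ∑ k, (Gmat β x)⁻¹ i k
      * pd i (fun y => pd k f₂ y) x)) * vdens β x) x
    rw [h1, h2]
    exact h.symm
end

section
/- In the exterior algebra of ℝ⁷, let β = c₁·e₂∧e₃ + c₂·e₄∧e₅ + c₃·e₆∧e₇ for real numbers c₁, c₂, c₃, and let ψ = e₄∧e₅∧e₆∧e₇ + e₂∧e₃∧e₆∧e₇ + e₂∧e₃∧e₄∧e₅ + e₁∧e₃∧e₅∧e₇ − e₁∧e₃∧e₄∧e₆ − e₁∧e₂∧e₅∧e₆ − e₁∧e₂∧e₄∧e₇. Then β∧β∧β = 6·(β∧ψ) if and only if c₁ + c₂ + c₃ = c₁·c₂·c₃. (The computation underlying the equivalence (1) ⇔ (3) of Lemma 5.16) -/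
/-!
With `ω₁ = e₂∧e₃`, `ω₂ = e₄∧e₅`, `ω₃ = e₆∧e₇` one has `β = Σ cᵢωᵢ` and `ψ = ω₂ω₃ + ω₁ω₃ + ω₁ω₂ + ψ'`,
where every monomial of `ψ'` contains `e₁` together with one vector from each pair. The `ωᵢ`
commute and square to zero, and each `ωᵢ` kills `ψ'`, so `β³ = 6c₁c₂c₃ ω₁ω₂ω₃` and
`β∧ψ = (c₁ + c₂ + c₃) ω₁ω₂ω₃`. The equivalence follows because `ω₁ω₂ω₃ = e₂∧⋯∧e₇` is nonzero,
the wedge of linearly independent vectors.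
-/

/-- The images of the standard basis of `ℝ⁷` in the exterior algebra; `e i`
corresponds to `e_{i+1}` in the paper's notation. -/
noncomputable def e (i : Fin 7) : ExteriorAlgebra ℝ (Fin 7 → ℝ) :=
  ExteriorAlgebra.ι ℝ (Pi.single i 1)

theorem ιMulti_ne_zero_of_linearIndependent {K E : Type*} [Field K] [AddCommGroup E]
    [Module K E] {n : ℕ} {v : Fin n → E} (hv : LinearIndependent K v) :
    ExteriorAlgebra.ιMulti K n v ≠ 0 := by
  intro h
  refine (exteriorPower.ιMulti_family_linearIndependent_field (n := n) hv).ne_zero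
    (Set.powersetCard.ofFinEmbEquiv (RelEmbedding.refl (· ≤ ·))) (Subtype.ext ?_)
  simpa [exteriorPower.ιMulti_family] using h

lemma e_mul_self (i : Fin 7) : e i * e i = 0 := ExteriorAlgebra.ι_sq_zero _

lemma e_mul_e_mul_self (i : Fin 7) (x : ExteriorAlgebra ℝ (Fin 7 → ℝ)) :
    e i * (e i * x) = 0 := by
  rw [← mul_assoc, e_mul_self, zero_mul]

/- Oriented by `j < i`, so that as a `simp` rule it sorts monomials into increasing order. -/
lemma e_mul_e_of_lt {i j : Fin 7} (_ : j < i) : e i * e j = -(e j * e i) :=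
  eq_neg_of_add_eq_zero_left (ExteriorAlgebra.ι_add_mul_swap _ _)

lemma e_mul_e_mul_of_lt {i j : Fin 7} (h : j < i) (x : ExteriorAlgebra ℝ (Fin 7 → ℝ)) :
    e i * (e j * x) = -(e j * (e i * x)) := by
  rw [← mul_assoc, e_mul_e_of_lt h, neg_mul, mul_assoc]

lemma e_one_to_six_ne_zero : e 1 * e 2 * e 3 * e 4 * e 5 * e 6 ≠ 0 := by
  have h := ιMulti_ne_zero_of_linearIndependent
    ((Pi.linearIndependent_single_one (Fin 7) ℝ).comp Fin.succ (Fin.succ_injective 6))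
  convert h using 1
  simp only [ExteriorAlgebra.ιMulti_apply, List.ofFn_succ, List.ofFn_zero, List.prod_cons,
    List.prod_nil, mul_one, e, mul_assoc]
  rfl

noncomputable def diagForm (c₁ c₂ c₃ : ℝ) : ExteriorAlgebra ℝ (Fin 7 → ℝ) :=
  c₁ • (e 1 * e 2) + c₂ • (e 3 * e 4) + c₃ • (e 5 * e 6)

noncomputable def starPhi : ExteriorAlgebra ℝ (Fin 7 → ℝ) :=
  e 3 * e 4 * e 5 * e 6 + e 1 * e 2 * e 5 * e 6 + e 1 * e 2 * e 3 * e 4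
    + e 0 * e 2 * e 4 * e 6 - e 0 * e 2 * e 3 * e 5 - e 0 * e 1 * e 4 * e 5
    - e 0 * e 1 * e 3 * e 6

lemma diagForm_cube (c₁ c₂ c₃ : ℝ) :
    diagForm c₁ c₂ c₃ * diagForm c₁ c₂ c₃ * diagForm c₁ c₂ c₃
      = (6 * c₁ * c₂ * c₃) • (e 1 * e 2 * e 3 * e 4 * e 5 * e 6) := by
  simp +decide only [diagForm, mul_add, add_mul, smul_mul_assoc, mul_smul_comm, mul_assoc,
    e_mul_self, e_mul_e_mul_self, e_mul_e_of_lt, e_mul_e_mul_of_lt, mul_neg, neg_neg, neg_zero,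
    zero_mul, mul_zero]
  module

lemma diagForm_mul_starPhi (c₁ c₂ c₃ : ℝ) :
    diagForm c₁ c₂ c₃ * starPhi = (c₁ + c₂ + c₃) • (e 1 * e 2 * e 3 * e 4 * e 5 * e 6) := by
  simp +decide only [diagForm, starPhi, mul_add, add_mul, mul_sub, smul_mul_assoc, mul_assoc,
    e_mul_self, e_mul_e_mul_self, e_mul_e_of_lt, e_mul_e_mul_of_lt, mul_neg, neg_neg, neg_zero,
    mul_zero]
  module

/-- **Lemma 5.16, (1) ⇔ (3).** For
`β = c₁·e₂∧e₃ + c₂·e₄∧e₅ + c₃·e₆∧e₇` and `ψ = *φ` the Hodge dual of the standard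
`G₂` 3-form, one has `β∧β∧β = 6·(β∧ψ)` iff `c₁ + c₂ + c₃ = c₁c₂c₃`. -/
theorem dDT_diag_iff (c₁ c₂ c₃ : ℝ)
    (β ψ : ExteriorAlgebra ℝ (Fin 7 → ℝ))
    (hβ : β = c₁ • (e 1 * e 2) + c₂ • (e 3 * e 4) + c₃ • (e 5 * e 6))
    (hψ : ψ = e 3 * e 4 * e 5 * e 6 + e 1 * e 2 * e 5 * e 6 + e 1 * e 2 * e 3 * e 4
      + e 0 * e 2 * e 4 * e 6 - e 0 * e 2 * e 3 * e 5 - e 0 * e 1 * e 4 * e 5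
      - e 0 * e 1 * e 3 * e 6) :
    β * β * β = 6 * (β * ψ) ↔ c₁ + c₂ + c₃ = c₁ * c₂ * c₃ := by
  have hβ' : β = diagForm c₁ c₂ c₃ := hβ
  have hψ' : ψ = starPhi := hψ
  have hsix : (6 : ExteriorAlgebra ℝ (Fin 7 → ℝ)) = algebraMap ℝ _ 6 := (map_ofNat _ 6).symm
  rw [hβ', hψ', diagForm_cube, diagForm_mul_starPhi, hsix, ← Algebra.smul_def, smul_smul,
    (smul_left_injective ℝ e_one_to_six_ne_zero).eq_iff]
  constructor <;> intro h <;> linarith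
end

section
/- Let c₁, c₂, c₃ be real numbers with c₁ + c₂ + c₃ = c₁·c₂·c₃. Then 1 + 2/(c₁²+1) + 2/(c₂²+1) + 2/(c₃²+1) ≥ 5/2. (First inequality of Lemma 5.17) -/
/-!
Writing `(c₁² + 1)(c₂² + 1) = (c₁c₂ - 1)² + (c₁ + c₂)²` and using the constraint in the form
`c₁ + c₂ = c₃(c₁c₂ - 1)` gives `(c₁² + 1)(c₂² + 1) = (c₁c₂ - 1)²(c₃² + 1)`. This expresses
`1/(c₃² + 1)` through `c₁, c₂` alone, and after clearing denominators the claim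
`Σ 1/(cⱼ² + 1) ≥ 3/4` becomes `(c₁c₂ - 3)² + (c₁ - c₂)² ≥ 0`. Equality holds at `c₁ = c₂ = c₃ = √3`.
-/

lemma sq_add_one_mul_sq_add_one_eq_of_add_add_eq_mul_mul {R : Type*} [CommRing R] {a b c : R}
    (h : a + b + c = a * b * c) :
    (a ^ 2 + 1) * (b ^ 2 + 1) = (a * b - 1) ^ 2 * (c ^ 2 + 1) := by
  have hab : a + b = c * (a * b - 1) := by linear_combination h
  linear_combination (a + b + c * (a * b - 1)) * hab

lemma three_quarters_le_inv_add_inv_add (a b : ℝ) :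
    3 / 4 ≤ (a ^ 2 + 1)⁻¹ + (b ^ 2 + 1)⁻¹ + (a * b - 1) ^ 2 / ((a ^ 2 + 1) * (b ^ 2 + 1)) := by
  rw [inv_eq_one_div, inv_eq_one_div, div_add_div _ _ (by positivity) (by positivity),
    ← add_div, div_le_div_iff₀ (by norm_num) (by positivity)]
  nlinarith [sq_nonneg (a * b - 3), sq_nonneg (a - b)]

lemma three_quarters_le_sum_inv_sq_add_one {a b c : ℝ} (h : a + b + c = a * b * c) :
    3 / 4 ≤ (a ^ 2 + 1)⁻¹ + (b ^ 2 + 1)⁻¹ + (c ^ 2 + 1)⁻¹ := by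
  have hc : (c ^ 2 + 1)⁻¹ = (a * b - 1) ^ 2 / ((a ^ 2 + 1) * (b ^ 2 + 1)) := by
    rw [sq_add_one_mul_sq_add_one_eq_of_add_add_eq_mul_mul h, div_mul_cancel_left₀]
    intro hab
    have hab' : a * b = 1 := by simpa [sub_eq_zero] using hab
    have hsum : a + b = 0 := by linear_combination h + c * hab'
    have : a ^ 2 = -1 := by linear_combination a * hsum - hab'
    linarith [sq_nonneg a]
  exact hc ▸ three_quarters_le_inv_add_inv_add a b

/-- **first inequality of Lemma 5.17.** If `c₁ + c₂ + c₃ = c₁c₂c₃`,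
then `1 + 2/(c₁²+1) + 2/(c₂²+1) + 2/(c₃²+1) ≥ 5/2`. -/
theorem trace_inv_ge_five_halves (c₁ c₂ c₃ : ℝ) (h : c₁ + c₂ + c₃ = c₁ * c₂ * c₃) :
    (5 : ℝ) / 2 ≤ 1 + 2 / (c₁ ^ 2 + 1) + 2 / (c₂ ^ 2 + 1) + 2 / (c₃ ^ 2 + 1) := by
  simp only [div_eq_mul_inv (2 : ℝ)]
  linarith [three_quarters_le_sum_inv_sq_add_one h]
end

section
/- Let c₁, c₂, c₃ be real numbers with c₁ + c₂ + c₃ = c₁·c₂·c₃, and set v = √((c₁²+1)·(c₂²+1)·(c₃²+1)). Then (1 + 2/(c₁²+1) + 2/(c₂²+1) + 2/(c₃²+1))·v − 7 ≥ (13/7)·(v − 1). (Second inequality of Lemma 5.17) -/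
/-!
Write `σ₁, σ₂, σ₃` for the elementary symmetric functions of the `cⱼ` and `t = σ₂ - 1`.
Since `∏ (1 + i cⱼ) = -t + i (σ₁ - σ₃)`, the constraint makes `v = |t|`, and then `1 + Σ 2/(cⱼ² + 1)`
equals `3 - 4/t`. Newton's inequalities `σ₁² ≥ 3σ₂` and `σ₂² ≥ 3σ₁σ₃ = 3σ₁²` give
`σ₂ (σ₂ - 9) ≥ 0`, i.e. `t ≤ -1` or `t ≥ 8`. On each of these rays the inequality is linear
in `t`, with equality at `t = 8`.
-/

lemma three_mul_add_mul_add_mul_le_sq {R : Type*} [CommRing R] [LinearOrder R]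
    [IsStrictOrderedRing R] (a b c : R) :
    3 * (a * b + b * c + c * a) ≤ (a + b + c) ^ 2 := by
  nlinarith [sq_nonneg (a - b), sq_nonneg (b - c), sq_nonneg (c - a)]

lemma mul_add_mul_add_mul_nonpos_or_nine_le {a b c : ℝ} (h : a + b + c = a * b * c) :
    a * b + b * c + c * a ≤ 0 ∨ 9 ≤ a * b + b * c + c * a := by
  have newton₁ := three_mul_add_mul_add_mul_le_sq a b c
  have newton₂ := three_mul_add_mul_add_mul_le_sq (a * b) (b * c) (c * a)
  have key : 9 * (a * b + b * c + c * a) ≤ (a * b + b * c + c * a) ^ 2 :=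
    calc 9 * (a * b + b * c + c * a) ≤ 3 * (a + b + c) ^ 2 := by linarith
      _ = 3 * (a * b * (b * c) + b * c * (c * a) + c * a * (a * b)) := by
        linear_combination (3 * (a + b + c)) * h
      _ ≤ (a * b + b * c + c * a) ^ 2 := newton₂
  rcases le_or_gt (a * b + b * c + c * a) 0 with hle | hpos
  · exact Or.inl hle
  · exact Or.inr (le_of_mul_le_mul_right (by rwa [sq] at key) hpos)

lemma prod_sq_add_one_eq {R : Type*} [CommRing R] (a b c : R) :
    (a ^ 2 + 1) * (b ^ 2 + 1) * (c ^ 2 + 1) =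
      (a * b + b * c + c * a - 1) ^ 2 + (a + b + c - a * b * c) ^ 2 := by
  ring

lemma trace_mul_eq {a b c : ℝ} (h : a + b + c = a * b * c) :
    (1 + 2 / (a ^ 2 + 1) + 2 / (b ^ 2 + 1) + 2 / (c ^ 2 + 1)) * (a * b + b * c + c * a - 1) =
      3 * (a * b + b * c + c * a - 1) - 4 := by
  set t := a * b + b * c + c * a - 1
  have hprod : (a ^ 2 + 1) * (b ^ 2 + 1) * (c ^ 2 + 1) = t ^ 2 := by
    rw [prod_sq_add_one_eq, h, sub_self]; ring
  have ht : t ≠ 0 := by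
    rintro ht
    have : 0 < (a ^ 2 + 1) * (b ^ 2 + 1) * (c ^ 2 + 1) := by positivity
    simp [hprod, ht] at this
  have hsum : (b ^ 2 + 1) * (c ^ 2 + 1) + (a ^ 2 + 1) * (c ^ 2 + 1) + (a ^ 2 + 1) * (b ^ 2 + 1) =
      t ^ 2 - 2 * t := by
    linear_combination 2 * (a + b + c) * h
  have hT : (1 + 2 / (a ^ 2 + 1) + 2 / (b ^ 2 + 1) + 2 / (c ^ 2 + 1)) * t ^ 2 =
      (3 * t - 4) * t := by
    rw [← hprod]
    field_simp
    linear_combination 2 * hsum + hprod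
  exact mul_right_cancel₀ ht (by linear_combination hT)

lemma thirteen_div_seven_mul_abs_sub_one_le {t T : ℝ} (ht : t ≤ -1 ∨ 8 ≤ t)
    (hT : T * t = 3 * t - 4) : 13 / 7 * (|t| - 1) ≤ T * |t| - 7 := by
  rcases ht with ht | ht
  · rw [abs_of_neg (by linarith), mul_neg, hT]
    linarith
  · rw [abs_of_pos (by linarith), hT]
    linarith

/-- **second inequality of Lemma 5.17.** If `c₁ + c₂ + c₃ = c₁c₂c₃`
and `v = √((c₁²+1)(c₂²+1)(c₃²+1))`, then
`(1 + 2/(c₁²+1) + 2/(c₂²+1) + 2/(c₃²+1))·v − 7 ≥ (13/7)·(v − 1)`. -/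
theorem trace_inv_mul_v_ineq (c₁ c₂ c₃ : ℝ) (h : c₁ + c₂ + c₃ = c₁ * c₂ * c₃)
    (v : ℝ) (hv : v = Real.sqrt ((c₁ ^ 2 + 1) * (c₂ ^ 2 + 1) * (c₃ ^ 2 + 1))) :
    (13 : ℝ) / 7 * (v - 1) ≤
      (1 + 2 / (c₁ ^ 2 + 1) + 2 / (c₂ ^ 2 + 1) + 2 / (c₃ ^ 2 + 1)) * v - 7 := by
  have hv_abs : v = |c₁ * c₂ + c₂ * c₃ + c₃ * c₁ - 1| := by
    rw [hv, prod_sq_add_one_eq, h, sub_self, zero_pow two_ne_zero, add_zero,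
      Real.sqrt_sq_eq_abs]
  rw [hv_abs]
  refine thirteen_div_seven_mul_abs_sub_one_le ?_ (trace_mul_eq h)
  exact (mul_add_mul_add_mul_nonpos_or_nine_le h).imp
    (fun _ ↦ by linarith) (fun _ ↦ by linarith)
end
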